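/- Let G be a finite connected partial cube and H a connected subgraph of G. Then the set of Θ-classes of G occurring in H equals the set of Θ-classes of G occurring in the convex hull co_G(H) of H in G. -/

import Mathlib

open SimpleGraph Polynomial

/-- The hypercube `Q_n`: vertices are functions `Fin n → Bool`, two vertices adjacent
iff they differ in exactly one coordinate. -/
def hypercube (n : ℕ) : SimpleGraph (Fin n → Bool) where
  Adj x y := ∃! i, x i ≠ y i
  symm := ⟨by
    rintro x y ⟨i, hi, hu⟩
    exact ⟨i, hi.symm, fun j hj => hu j hj.symm⟩⟩
  loopless := ⟨by
    rintro x ⟨i, hi, -⟩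
    exact hi rfl⟩

/-- `f` is an isometric embedding of `G` into `H` (distances are preserved); its image is
an isometric subgraph of `H`. -/
def IsIsometricEmbedding {V W : Type*} (G : SimpleGraph V) (H : SimpleGraph W)
    (f : V → W) : Prop :=
  Function.Injective f ∧ ∀ u v : V, H.dist (f u) (f v) = G.dist u v

/-- A partial cube: a connected graph isomorphic to an isometric subgraph of some hypercube. -/
def IsPartialCube {V : Type*} (G : SimpleGraph V) : Prop :=
  G.Connected ∧ ∃ (n : ℕ) (f : V → (Fin n → Bool)), IsIsometricEmbedding G (hypercube n) f

/-- The Djoković–Winkler relation on (unordered) edges: `e = uv` and `f = xy` are related iff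
`d(u,x) + d(v,y) ≠ d(u,y) + d(v,x)`. -/
def DWRel {V : Type*} (G : SimpleGraph V) (e f : Sym2 V) : Prop :=
  ∃ u v x y : V, e = s(u, v) ∧ f = s(x, y) ∧
    G.dist u x + G.dist v y ≠ G.dist u y + G.dist v x

/-- The set of edges of `G` that are Θ-related to `e`. -/
def thetaClassOf {V : Type*} (G : SimpleGraph V) (e : Sym2 V) : Set (Sym2 V) :=
  {f | f ∈ G.edgeSet ∧ DWRel G e f}

/-- `C` is a Θ-class of `G`: the class of some edge of `G` under the Djoković–Winkler
relation. -/
def IsThetaClass {V : Type*} (G : SimpleGraph V) (C : Set (Sym2 V)) : Prop :=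
  ∃ e ∈ G.edgeSet, C = thetaClassOf G e

/-- `W_{uv}`: the set of vertices strictly closer to `u` than to `v`. -/
def sideW {V : Type*} (G : SimpleGraph V) (u v : V) : Set V :=
  {w | G.dist u w < G.dist v w}

/-- Two Θ-classes `C₁ = F_{ab}` and `C₂ = F_{uv}` cross: all four sets
`W_{ab} ∩ W_{uv}`, `W_{ba} ∩ W_{uv}`, `W_{ab} ∩ W_{vu}`, `W_{ba} ∩ W_{vu}` are nonempty. -/
def Crosses {V : Type*} (G : SimpleGraph V) (C₁ C₂ : Set (Sym2 V)) : Prop :=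
  ∃ a b u v : V, G.Adj a b ∧ G.Adj u v ∧
    C₁ = thetaClassOf G s(a, b) ∧ C₂ = thetaClassOf G s(u, v) ∧
    (sideW G a b ∩ sideW G u v).Nonempty ∧ (sideW G b a ∩ sideW G u v).Nonempty ∧
    (sideW G a b ∩ sideW G v u).Nonempty ∧ (sideW G b a ∩ sideW G v u).Nonempty

lemma Crosses.symm {V : Type*} {G : SimpleGraph V} {C₁ C₂ : Set (Sym2 V)}
    (h : Crosses G C₁ C₂) : Crosses G C₂ C₁ := by
  obtain ⟨a, b, u, v, hab, huv, h1, h2, n1, n2, n3, n4⟩ := h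
  refine ⟨u, v, a, b, huv, hab, h2, h1, ?_, ?_, ?_, ?_⟩ <;> rw [Set.inter_comm]
  exacts [n1, n3, n2, n4]

/-- The crossing graph `G^#` of a partial cube `G`: vertices are the Θ-classes of `G`,
two Θ-classes being adjacent iff they cross. -/
def crossingGraph {V : Type*} (G : SimpleGraph V) :
    SimpleGraph {C : Set (Sym2 V) // IsThetaClass G C} where
  Adj C₁ C₂ := C₁ ≠ C₂ ∧ Crosses G C₁.1 C₂.1
  symm := ⟨fun _ _ h => ⟨h.1.symm, h.2.symm⟩⟩
  loopless := ⟨fun _ h => h.1 rfl⟩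

/-- A median graph: a connected graph in which every triple of vertices has a unique median. -/
def IsMedianGraph {V : Type*} (G : SimpleGraph V) : Prop :=
  G.Connected ∧ ∀ u v w : V, ∃! x : V,
    G.dist u x + G.dist x v = G.dist u v ∧
    G.dist u x + G.dist x w = G.dist u w ∧
    G.dist v x + G.dist x w = G.dist v w

/-- `α_i(G)`: the number of induced subgraphs of `G` isomorphic to the `i`-cube. -/
noncomputable def cubeCount {V : Type*} (G : SimpleGraph V) (i : ℕ) : ℕ :=
  Nat.card {s : Set V // Nonempty ((G.induce s) ≃g hypercube i)}

/-- The cube polynomial `C(G,x) = Σ_i α_i(G) xⁱ`. -/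
noncomputable def cubePoly {V : Type*} [Finite V] (G : SimpleGraph V) : Polynomial ℕ :=
  ∑ i ∈ Finset.range (Nat.card V + 1), Polynomial.C (cubeCount G i) * Polynomial.X ^ i

/-- `a_i(G)`: the number of `i`-cliques of `G` (note `a_0 = 1`, the empty clique). -/
noncomputable def cliqueCount {V : Type*} (G : SimpleGraph V) (i : ℕ) : ℕ :=
  Nat.card {s : Finset V // G.IsNClique i s}

/-- The clique polynomial `Cl(G,x) = Σ_i a_i(G) xⁱ`. -/
noncomputable def cliquePoly {V : Type*} [Finite V] (G : SimpleGraph V) : Polynomial ℕ :=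
  ∑ i ∈ Finset.range (Nat.card V + 1), Polynomial.C (cliqueCount G i) * Polynomial.X ^ i

/-- A set `S` of vertices is convex: every shortest path between vertices of `S`
stays inside `S`. -/
def ConvexSet {V : Type*} (G : SimpleGraph V) (S : Set V) : Prop :=
  ∀ u ∈ S, ∀ v ∈ S, ∀ p : G.Walk u v, p.length = G.dist u v → ∀ y ∈ p.support, y ∈ S

/-- The convex hull of a vertex set: the smallest convex set containing it. -/
def gConvexHull {V : Type*} (G : SimpleGraph V) (S : Set V) : Set V :=
  ⋂₀ {T : Set V | ConvexSet G T ∧ S ⊆ T}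

/-- The Θ-class `θ` occurs in (the subgraph of `G` induced by) `S`. -/
def OccursIn {V : Type*} (G : SimpleGraph V) (θ : Set (Sym2 V)) (S : Set V) : Prop :=
  ∃ a b : V, G.Adj a b ∧ a ∈ S ∧ b ∈ S ∧ s(a, b) ∈ θ

/-- A `θ₁,θ₂`-alternating 4-cycle `u v w x u`: edges `uv, xw ∈ θ₁` and `ux, vw ∈ θ₂`. -/
def AltFourCycle {V : Type*} (G : SimpleGraph V) (θ₁ θ₂ : Set (Sym2 V)) (u v w x : V) : Prop :=
  G.Adj u v ∧ G.Adj v w ∧ G.Adj w x ∧ G.Adj x u ∧ u ≠ w ∧ v ≠ x ∧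
  s(u, v) ∈ θ₁ ∧ s(x, w) ∈ θ₁ ∧ s(u, x) ∈ θ₂ ∧ s(v, w) ∈ θ₂

/-- A polynomial with nonnegative coefficients is unimodal. -/
def PolyUnimodal (P : Polynomial ℕ) : Prop :=
  ∃ m : ℕ, (∀ i, i < m → P.coeff i ≤ P.coeff (i + 1)) ∧
    (∀ i, m ≤ i → P.coeff (i + 1) ≤ P.coeff i)

/-! Embed `G` isometrically into `Q_n`. The edges of the Θ-class of an edge `ab` are exactly the
edges along which the coordinate flipped by `ab` changes, because `d(a, w) - d(b, w)` is `∓1`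
according to that coordinate of `w`. A coordinate half-space of `Q_n` is convex, so the set of
vertices of `G` with a given coordinate value is convex. If no edge of the connected subgraph `H`
lies in the class, the coordinate is constant on `H`, hence on its convex hull, so no edge of the
hull lies in the class either. -/

section Hypercube

variable {n : ℕ} {x y z w : Fin n → Bool} {i : Fin n}

lemma hammingDist_eq_one_of_hypercube_adj (h : (hypercube n).Adj x y) : hammingDist x y = 1 := by
  obtain ⟨i, hi, huniq⟩ := h
  refine Finset.card_eq_one.mpr ⟨i, Finset.ext fun j => ?_⟩
  simp only [Finset.mem_filter, Finset.mem_univ, true_and, Finset.mem_singleton]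
  exact ⟨huniq j, fun hj => hj ▸ hi⟩

lemma hammingDist_le_length (p : (hypercube n).Walk x y) : hammingDist x y ≤ p.length := by
  induction p with
  | nil => simp
  | @cons u v t huv _ ih =>
    have := hammingDist_triangle u v t
    rw [hammingDist_eq_one_of_hypercube_adj huv] at this
    rw [SimpleGraph.Walk.length_cons]
    omega

lemma hypercube_adj_update {b : Bool} (h : x i ≠ b) :
    (hypercube n).Adj x (Function.update x i b) :=
  ⟨i, by simpa using h, fun j hj => by_contra fun hji => hj (Function.update_of_ne hji b x).symm⟩

lemma hammingDist_update_add_one (h : x i ≠ y i) :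
    hammingDist (Function.update x i (y i)) y + 1 = hammingDist x y := by
  have herase : Finset.univ.filter (fun j => Function.update x i (y i) j ≠ y j)
      = (Finset.univ.filter fun j => x j ≠ y j).erase i := by
    ext j
    rcases eq_or_ne j i with rfl | hj
    · simp
    · simp [hj]
  rw [hammingDist, herase, Finset.card_erase_add_one (by simpa using h), hammingDist]

lemma exists_walk_length_eq_hammingDist (x y : Fin n → Bool) :
    ∃ p : (hypercube n).Walk x y, p.length = hammingDist x y := by
  induction hd : hammingDist x y generalizing x with
  | zero =>
    obtain rfl := hammingDist_eq_zero.mp hd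
    exact ⟨.nil, rfl⟩
  | succ d ih =>
    obtain ⟨i, hi⟩ : ∃ i, x i ≠ y i := Function.ne_iff.mp (hammingDist_pos.mp (by omega))
    obtain ⟨p, hp⟩ :=
      ih (Function.update x i (y i)) (by have := hammingDist_update_add_one hi; omega)
    exact ⟨.cons (hypercube_adj_update hi) p, by rw [SimpleGraph.Walk.length_cons, hp]⟩

theorem hypercube_dist (x y : Fin n → Bool) : (hypercube n).dist x y = hammingDist x y := by
  obtain ⟨p, hp⟩ := exists_walk_length_eq_hammingDist x y
  obtain ⟨q, hq⟩ := p.reachable.exists_walk_length_eq_dist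
  exact le_antisymm (hp ▸ SimpleGraph.dist_le p) (hq ▸ hammingDist_le_length q)

lemma hypercube_dist_eq_add_one_of_adj (hxy : (hypercube n).Adj x y) (hi : x i ≠ y i)
    (hw : w i = x i) : (hypercube n).dist y w = (hypercube n).dist x w + 1 := by
  obtain ⟨k, -, huniq⟩ := hxy
  have hinsert : Finset.univ.filter (fun j => y j ≠ w j)
      = insert i (Finset.univ.filter fun j => x j ≠ w j) := by
    ext j
    rcases eq_or_ne j i with rfl | hj
    · simpa [hw] using hi.symm
    · have hxyj : x j = y j := by_contra fun h => hj ((huniq j h).trans (huniq i hi).symm)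
      simp [hj, hxyj]
  rw [hypercube_dist, hypercube_dist, hammingDist, hinsert,
    Finset.card_insert_of_notMem (by simpa using hw.symm), hammingDist]

lemma coord_eq_of_hypercube_dist_add_dist_eq
    (h : (hypercube n).dist x y + (hypercube n).dist y z = (hypercube n).dist x z)
    (hxz : x i = z i) : y i = x i := by
  by_contra hyx
  rw [hypercube_dist, hypercube_dist, hypercube_dist] at h
  have hlt : hammingDist x z < hammingDist x y + hammingDist y z := by
    simp only [hammingDist, Finset.card_filter, ← Finset.sum_add_distrib]
    refine Finset.sum_lt_sum (fun j _ => ?_) ⟨i, Finset.mem_univ _, ?_⟩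
    · cases x j <;> cases y j <;> cases z j <;> simp
    · revert hxz hyx; cases x i <;> cases y i <;> cases z i <;> simp
  omega

end Hypercube

lemma SimpleGraph.Walk.dist_add_dist_le_length {V : Type*} {G : SimpleGraph V} {u v y : V}
    (p : G.Walk u v) (hy : y ∈ p.support) : G.dist u y + G.dist y v ≤ p.length := by
  classical
  have hsplit := congrArg SimpleGraph.Walk.length (p.take_spec hy)
  rw [SimpleGraph.Walk.length_append] at hsplit
  have := SimpleGraph.dist_le (p.takeUntil y hy)
  have := SimpleGraph.dist_le (p.dropUntil y hy)
  omega

lemma SimpleGraph.Subgraph.Preconnected.apply_eq_of_forall_adj {V β : Type*} {G : SimpleGraph V}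
    {H : G.Subgraph} (hH : H.Preconnected) {g : V → β} (hg : ∀ x y, H.Adj x y → g x = g y)
    {u v : V} (hu : u ∈ H.verts) (hv : v ∈ H.verts) : g u = g v := by
  suffices ∀ s t : H.verts, H.coe.Walk s t → g s = g t from
    this ⟨u, hu⟩ ⟨v, hv⟩ (hH _ _).some
  intro s t p
  induction p with
  | nil => rfl
  | cons h _ ih => exact (hg _ _ h).trans ih

section ConvexHull

variable {V : Type*} {G : SimpleGraph V} {S T : Set V}

lemma subset_gConvexHull : S ⊆ gConvexHull G S :=
  fun _ hw => Set.mem_sInter.mpr fun _ hT => hT.2 hw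

lemma gConvexHull_subset (hT : ConvexSet G T) (hST : S ⊆ T) : gConvexHull G S ⊆ T :=
  Set.sInter_subset_of_mem ⟨hT, hST⟩

end ConvexHull

lemma dwRel_mk_iff {V : Type*} {G : SimpleGraph V} {u v x y : V} :
    DWRel G s(u, v) s(x, y) ↔ G.dist u x + G.dist v y ≠ G.dist u y + G.dist v x := by
  refine ⟨?_, fun h => ⟨u, v, x, y, rfl, rfl, h⟩⟩
  rintro ⟨u', v', x', y', huv, hxy, hne⟩
  rw [Sym2.eq_iff] at huv hxy
  rcases huv with ⟨rfl, rfl⟩ | ⟨rfl, rfl⟩ <;> rcases hxy with ⟨rfl, rfl⟩ | ⟨rfl, rfl⟩ <;> omega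

section IsometricEmbedding

variable {V : Type*} {G : SimpleGraph V} {n : ℕ} {f : V → Fin n → Bool}
  (hf : ∀ u v, (hypercube n).dist (f u) (f v) = G.dist u v)
include hf

lemma hypercube_adj_of_adj {a b : V} (hab : G.Adj a b) : (hypercube n).Adj (f a) (f b) := by
  rw [← SimpleGraph.dist_eq_one_iff_adj, hf, SimpleGraph.dist_eq_one_iff_adj]
  exact hab

lemma dwRel_iff_coord_ne {a b x y : V} (hab : G.Adj a b) {i : Fin n} (hi : f a i ≠ f b i) :
    DWRel G s(a, b) s(x, y) ↔ f x i ≠ f y i := by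
  have hside : ∀ w, (f w i = f a i ∧ G.dist b w = G.dist a w + 1) ∨
      (f w i = f b i ∧ G.dist a w = G.dist b w + 1) := by
    intro w
    simp only [← hf]
    have hadj := hypercube_adj_of_adj hf hab
    by_cases hw : f w i = f a i
    · exact .inl ⟨hw, hypercube_dist_eq_add_one_of_adj hadj hi hw⟩
    · have hw' : f w i = f b i :=
        (Bool.eq_not_iff.mpr hw).trans (Bool.eq_not_iff.mpr hi.symm).symm
      exact .inr ⟨hw', hypercube_dist_eq_add_one_of_adj hadj.symm hi.symm hw'⟩
  rw [dwRel_mk_iff]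
  rcases hside x with ⟨hx, hx'⟩ | ⟨hx, hx'⟩ <;> rcases hside y with ⟨hy, hy'⟩ | ⟨hy, hy'⟩ <;>
    simp only [hx, hy, ne_eq, hi, Ne.symm hi, not_true_eq_false, not_false_eq_true, iff_true,
      iff_false, not_not] <;> omega

lemma mem_thetaClassOf_iff {a b x y : V} (hab : G.Adj a b) {i : Fin n} (hi : f a i ≠ f b i) :
    s(x, y) ∈ thetaClassOf G s(a, b) ↔ G.Adj x y ∧ f x i ≠ f y i :=
  and_congr Iff.rfl (dwRel_iff_coord_ne hf hab hi)

lemma convexSet_setOf_coord_eq (i : Fin n) (c : Bool) : ConvexSet G {w | f w i = c} := by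
  intro u hu v hv p hp y hy
  have hgeod : (hypercube n).dist (f u) (f y) + (hypercube n).dist (f y) (f v)
      = (hypercube n).dist (f u) (f v) := by
    refine le_antisymm ?_ ?_
    · simpa only [hf, ← hp] using p.dist_add_dist_le_length hy
    · simpa only [hypercube_dist] using hammingDist_triangle (f u) (f y) (f v)
  exact (coord_eq_of_hypercube_dist_add_dist_eq hgeod (hu.trans hv.symm)).trans hu

end IsometricEmbedding

theorem occursIn_iff_occursIn_convexHull_general {V : Type*} (G : SimpleGraph V)
    (hpc : IsPartialCube G) (H : G.Subgraph) (hconn : H.Connected)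
    (θ : Set (Sym2 V)) (hθ : IsThetaClass G θ) :
    (∃ a b : V, H.Adj a b ∧ s(a, b) ∈ θ) ↔ OccursIn G θ (gConvexHull G H.verts) := by
  obtain ⟨-, n, f, -, hf⟩ := hpc
  obtain ⟨⟨a, b⟩, hab, rfl⟩ := hθ
  obtain ⟨i, hi, -⟩ := hypercube_adj_of_adj hf hab
  have hmem {x y : V} := mem_thetaClassOf_iff (x := x) (y := y) hf hab hi
  constructor
  · rintro ⟨x, y, hxy, hθxy⟩
    exact ⟨x, y, hxy.adj_sub, subset_gConvexHull (H.edge_vert hxy),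
      subset_gConvexHull (H.edge_vert hxy.symm), hθxy⟩
  · rintro ⟨x, y, hxy, hx, hy, hθxy⟩
    by_contra! hnone
    obtain ⟨v₀, hv₀⟩ := hconn.nonempty
    have hside : H.verts ⊆ {w | f w i = f v₀ i} := fun w hw =>
      hconn.preconnected.apply_eq_of_forall_adj
        (fun u u' huu' => not_not.mp fun hne => hnone u u' huu' (hmem.2 ⟨huu'.adj_sub, hne⟩))
        hw hv₀
    have hhull := gConvexHull_subset (convexSet_setOf_coord_eq hf i _) hside
    exact (hmem.1 hθxy).2 ((hhull hx).trans (hhull hy).symm)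

/-- In a finite connected partial cube `G`, a Θ-class occurs in a connected
subgraph `H` iff it occurs in the convex hull `co_G(H)` of `H` in `G`. -/
theorem occursIn_iff_occursIn_convexHull {V : Type*} [Finite V] (G : SimpleGraph V)
    (hpc : IsPartialCube G) (H : G.Subgraph) (hconn : H.Connected)
    (θ : Set (Sym2 V)) (hθ : IsThetaClass G θ) :
    (∃ a b : V, H.Adj a b ∧ s(a, b) ∈ θ) ↔ OccursIn G θ (gConvexHull G H.verts) :=
  occursIn_iff_occursIn_convexHull_general G hpc H hconn θ hθ
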